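/- For every real ζ with 0 ≤ ζ < 0.046, the second derivative of ξ₁ at ζ satisfies −27.336 ≤ ξ₁''(ζ) < −24.822. -/

import Mathlib

/-!
`Δ` is a quadratic `A ζ² + B ζ + C` with `A > 0` and negative discriminant, so it is positive
everywhere and `√Δ` is smooth. Since `4 A Δ − (Δ')²` is the constant `−discrim A B C`,
`(√Δ)'' = −discrim A B C / (4 √Δ³)`, hence `ξ₁'' = −K / √Δ³` with
`K = −discrim A B C / (8 a) ≈ 350.87`. On `[0, 0.046]` the convex function `Δ` lies between
its minimum `−discrim A B C / (4 A) ≈ 5.4821` and its value `Δ(0.046) ≈ 5.8302`, and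
squaring turns the two bounds on `K / √Δ³` into polynomial inequalities in `Δ`.
-/

/-- The coefficient `b(ζ)` (with `χ = 0.454`). -/
noncomputable def bcoef (ζ : ℝ) : ℝ := -0.18 * 0.454 + 0.09 * ζ - 2.337

/-- The coefficient `c(ζ)` (with `χ = 0.454`). -/
noncomputable def ccoef (ζ : ℝ) : ℝ :=
  16 * 0.454 ^ 2 - 32 * ζ ^ 2 - 16 * 0.454 + 8 * ζ - 16 * 0.454 * ζ + 4

/-- The discriminant `Δ(ζ) = b(ζ)² − 4ac(ζ)` with `a = 2.382`. -/
noncomputable def Δcoef (ζ : ℝ) : ℝ := (bcoef ζ) ^ 2 - 4 * 2.382 * (ccoef ζ)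

/-- The root `ξ₁(ζ) = (−b(ζ) − √Δ(ζ)) / (2a)` with `a = 2.382`. -/
noncomputable def xi1 (ζ : ℝ) : ℝ := (-(bcoef ζ) - Real.sqrt (Δcoef ζ)) / (2 * 2.382)

section Quadratic

variable {A B C : ℝ}

lemma neg_discrim_div_le_quadratic (hA : 0 < A) (x : ℝ) :
    -discrim A B C / (4 * A) ≤ A * x ^ 2 + B * x + C := by
  rw [div_le_iff₀ (by positivity), discrim]
  nlinarith [sq_nonneg (2 * A * x + B)]

lemma quadratic_pos_of_discrim_neg (hA : 0 < A) (hD : discrim A B C < 0) (x : ℝ) :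
    0 < A * x ^ 2 + B * x + C :=
  (div_pos (neg_pos.2 hD) (by positivity)).trans_le (neg_discrim_div_le_quadratic hA x)

lemma quadratic_le_of_mem_Icc (hA : 0 ≤ A) {l r x : ℝ} (hx : x ∈ Set.Icc l r)
    (hlr : A * l ^ 2 + B * l + C ≤ A * r ^ 2 + B * r + C) :
    A * x ^ 2 + B * x + C ≤ A * r ^ 2 + B * r + C := by
  obtain rfl | hlx := hx.1.eq_or_lt
  · exact hlr
  by_contra! h
  -- with `q y = A y² + B y + C`:
  -- `(x - l) (q r - q x) - (r - x) (q x - q l) = A (x - l) (r - x) (r - l)`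
  nlinarith [mul_nonneg (mul_nonneg (mul_nonneg hA (sub_nonneg.2 hx.1)) (sub_nonneg.2 hx.2))
      (sub_nonneg.2 (hlx.trans_le hx.2).le),
    mul_pos (sub_pos.2 hlx) (sub_pos.2 h),
    mul_nonneg (sub_nonneg.2 hx.2) (sub_nonneg.2 (hlr.trans h.le))]

lemma hasDerivAt_sqrt_quadratic {x : ℝ} (hx : 0 < A * x ^ 2 + B * x + C) :
    HasDerivAt (fun y => √(A * y ^ 2 + B * y + C))
      ((2 * A * x + B) / (2 * √(A * x ^ 2 + B * x + C))) x := by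
  have hq : HasDerivAt (fun y => A * y ^ 2 + B * y + C) (2 * A * x + B) x :=
    ((((hasDerivAt_pow 2 x).const_mul A).add ((hasDerivAt_id' x).const_mul B)).add_const
      C).congr_deriv (by ring)
  exact hq.sqrt hx.ne'

lemma hasDerivAt_deriv_sqrt_quadratic {x : ℝ} (hx : 0 < A * x ^ 2 + B * x + C) :
    HasDerivAt (fun y => (2 * A * y + B) / (2 * √(A * y ^ 2 + B * y + C)))
      (-discrim A B C / (4 * √(A * x ^ 2 + B * x + C) ^ 3)) x := by
  have hs : 0 < √(A * x ^ 2 + B * x + C) := Real.sqrt_pos.2 hx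
  have hs2 : √(A * x ^ 2 + B * x + C) ^ 2 = A * x ^ 2 + B * x + C := Real.sq_sqrt hx.le
  have hlin : HasDerivAt (fun y => 2 * A * y + B) (2 * A) x :=
    (((hasDerivAt_id' x).const_mul (2 * A)).add_const B).congr_deriv (mul_one _)
  refine (hlin.div ((hasDerivAt_sqrt_quadratic hx).const_mul 2) (by positivity)).congr_deriv ?_
  generalize √(A * x ^ 2 + B * x + C) = s at hs hs2 ⊢
  field_simp
  rw [discrim]
  linear_combination 16 * A * hs2

lemma deriv_deriv_quadratic_root (hq : ∀ x, 0 < A * x ^ 2 + B * x + C) (a β γ x : ℝ) :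
    deriv (deriv fun y => (-(β * y + γ) - √(A * y ^ 2 + B * y + C)) / (2 * a)) x =
      discrim A B C / (8 * a * √(A * x ^ 2 + B * x + C) ^ 3) := by
  have hderiv : deriv (fun y => (-(β * y + γ) - √(A * y ^ 2 + B * y + C)) / (2 * a)) =
      fun y => (-β - (2 * A * y + B) / (2 * √(A * y ^ 2 + B * y + C))) / (2 * a) := by
    funext y
    refine (((((hasDerivAt_id' y).const_mul β).add_const γ).neg.sub
      (hasDerivAt_sqrt_quadratic (hq y))).div_const (2 * a)).deriv.trans ?_
    rw [mul_one]
  rw [hderiv]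
  refine (((hasDerivAt_const x (-β)).sub
    (hasDerivAt_deriv_sqrt_quadratic (hq x))).div_const (2 * a)).deriv.trans ?_
  ring

end Quadratic

lemma div_sqrt_pow_three_le_iff {K M x : ℝ} (hK : 0 ≤ K) (hM : 0 ≤ M) (hx : 0 < x) :
    K / √x ^ 3 ≤ M ↔ K ^ 2 ≤ M ^ 2 * x ^ 3 := by
  rw [div_le_iff₀ (by positivity), ← pow_le_pow_iff_left₀ hK (by positivity) two_ne_zero,
    mul_pow, ← pow_mul, mul_comm 3, pow_mul, Real.sq_sqrt hx.le]

lemma lt_div_sqrt_pow_three_iff {K M x : ℝ} (hK : 0 ≤ K) (hM : 0 ≤ M) (hx : 0 < x) :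
    M < K / √x ^ 3 ↔ M ^ 2 * x ^ 3 < K ^ 2 := by
  rw [lt_div_iff₀ (by positivity), ← pow_lt_pow_iff_left₀ (by positivity) hK two_ne_zero,
    mul_pow, ← pow_mul, mul_comm 3, pow_mul, Real.sq_sqrt hx.le]

lemma bcoef_eq (ζ : ℝ) : bcoef ζ = 9 / 100 * ζ + -241872 / 100000 := by
  rw [bcoef]; ring

lemma Δcoef_eq (ζ : ℝ) :
    Δcoef ζ = 3049041 / 10000 * ζ ^ 2 + -2327493 / 312500 * ζ + 215922909 / 39062500 := by
  rw [Δcoef, bcoef, ccoef]; ring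

lemma xi1_eq : xi1 = fun ζ => (-(9 / 100 * ζ + -241872 / 100000) -
    √(3049041 / 10000 * ζ ^ 2 + -2327493 / 312500 * ζ + 215922909 / 39062500)) /
      (2 * 2.382) := by
  funext ζ; rw [xi1, bcoef_eq, Δcoef_eq]

/-- for `0 ≤ ζ < 0.046`, the second derivative of `ξ₁` satisfies
`−27.336 ≤ ξ₁''(ζ) < −24.822`. -/
theorem xi1_second_deriv_bounds (ζ : ℝ) (h0 : 0 ≤ ζ) (h1 : ζ < 0.046) :
    -27.336 ≤ deriv (deriv xi1) ζ ∧ deriv (deriv xi1) ζ < -24.822 := by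
  have hq : ∀ x : ℝ,
      0 < 3049041 / 10000 * x ^ 2 + -2327493 / 312500 * x + 215922909 / 39062500 :=
    quadratic_pos_of_discrim_neg (by norm_num) (by norm_num [discrim])
  have hΔ : 0 < Δcoef ζ := Δcoef_eq ζ ▸ hq ζ
  have hξ : deriv (deriv xi1) ζ = -(27411443271 / 78125000 / √(Δcoef ζ) ^ 3) := by
    rw [xi1_eq, deriv_deriv_quadratic_root hq, ← Δcoef_eq, discrim]
    ring
  have hlow : 10882342978587 / 1985052734375 ≤ Δcoef ζ := by
    refine le_of_eq_of_le ?_ (Δcoef_eq ζ ▸ neg_discrim_div_le_quadratic (by norm_num) ζ)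
    norm_num [discrim]
  have hup : Δcoef ζ ≤ Δcoef 0.046 := by
    simp only [Δcoef_eq]
    exact quadratic_le_of_mem_Icc (by norm_num) ⟨h0, h1.le⟩ (by norm_num)
  rw [hξ, neg_le_neg_iff, neg_lt_neg_iff,
    div_sqrt_pow_three_le_iff (by norm_num) (by norm_num) hΔ,
    lt_div_sqrt_pow_three_iff (by norm_num) (by norm_num) hΔ]
  constructor
  · calc _ ≤ (27.336 : ℝ) ^ 2 * (10882342978587 / 1985052734375) ^ 3 := by norm_num
      _ ≤ _ := by gcongr
  · calc _ ≤ (24.822 : ℝ) ^ 2 * Δcoef 0.046 ^ 3 := by gcongr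
      _ < _ := by norm_num [Δcoef_eq]
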